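/- The J-function J(σ) = 1 - ∫ (1/√(2πσ²)) exp(-(ξ - σ²/2)²/(2σ²)) · log₂(1 + e^{-ξ}) dξ satisfies 0 < J(σ) < 1 for every σ > 0. -/
import Mathlib


open MeasureTheory Real

/-- The J-function: `J(σ) = 1 - E[log₂(1 + e^{-Λ})]` where `Λ ~ N(σ²/2, σ²)`. -/
noncomputable def Jfun (σ : ℝ) : ℝ :=
  1 - ∫ x : ℝ, ProbabilityTheory.gaussianPDFReal (σ ^ 2 / 2) (Real.toNNReal (σ ^ 2)) x *
        Real.logb 2 (1 + Real.exp (-x))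

lemma logb_le_aux (t : ℝ) (ht : 0 < t) :
    Real.logb 2 (1 + t) ≤ 1 + (t - 1) / (2 * Real.log 2) := by
  have h2 : (0:ℝ) < Real.log 2 := Real.log_pos one_lt_two
  have key : Real.log ((1 + t) / 2) ≤ (1 + t) / 2 - 1 :=
    Real.log_le_sub_one_of_pos (by linarith)
  rw [Real.log_div (by linarith) two_ne_zero] at key
  rw [Real.logb, div_le_iff₀ h2]
  have : Real.log (1 + t) ≤ Real.log 2 + (t - 1) / 2 := by linarith
  calc Real.log (1 + t) ≤ Real.log 2 + (t - 1) / 2 := this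
    _ = (1 + (t - 1) / (2 * Real.log 2)) * Real.log 2 := by field_simp

lemma logb_lt_aux (t : ℝ) (ht : 0 < t) (ht1 : t ≠ 1) :
    Real.logb 2 (1 + t) < 1 + (t - 1) / (2 * Real.log 2) := by
  have h2 : (0:ℝ) < Real.log 2 := Real.log_pos one_lt_two
  have key : Real.log ((1 + t) / 2) < (1 + t) / 2 - 1 := by
    apply Real.log_lt_sub_one_of_pos (by linarith)
    intro h
    apply ht1
    field_simp at h
    linarith
  rw [Real.log_div (by linarith) two_ne_zero] at key
  rw [Real.logb, div_lt_iff₀ h2]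
  have : Real.log (1 + t) < Real.log 2 + (t - 1) / 2 := by linarith
  calc Real.log (1 + t) < Real.log 2 + (t - 1) / 2 := this
    _ = (1 + (t - 1) / (2 * Real.log 2)) * Real.log 2 := by field_simp

/-- `0 < J(σ) < 1` for every `σ > 0`. -/
theorem Jfun_mem_Ioo (σ : ℝ) (hσ : 0 < σ) : 0 < Jfun σ ∧ Jfun σ < 1 := by
  have hσ2 : (0:ℝ) < σ ^ 2 := by positivity
  set v : NNReal := Real.toNNReal (σ ^ 2) with hv
  have hv0 : v ≠ 0 := by
    simp [hv, Real.toNNReal_eq_zero]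
    linarith
  have hvc : (v : ℝ) = σ ^ 2 := Real.coe_toNNReal _ hσ2.le
  set p : ℝ → ℝ := ProbabilityTheory.gaussianPDFReal (σ ^ 2 / 2) v with hp
  set g : ℝ → ℝ := fun x => Real.logb 2 (1 + Real.exp (-x)) with hg
  set h : ℝ → ℝ := fun x => 1 + (Real.exp (-x) - 1) / (2 * Real.log 2) with hh
  have hp_pos : ∀ x, 0 < p x := fun x =>
    ProbabilityTheory.gaussianPDFReal_pos _ _ _ hv0
  -- key identity : p x * exp (-x) = gaussian pdf with mean -σ²/2
  have key : ∀ x, p x * Real.exp (-x)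
      = ProbabilityTheory.gaussianPDFReal (-(σ ^ 2) / 2) v x := by
    intro x
    simp only [hp, ProbabilityTheory.gaussianPDFReal, hvc]
    rw [mul_assoc, ← Real.exp_add]
    congr 2
    field_simp
    ring
  have int_p : Integrable p := ProbabilityTheory.integrable_gaussianPDFReal _ _
  have I_p : ∫ x, p x = 1 := ProbabilityTheory.integral_gaussianPDFReal_eq_one _ hv0
  have int_pe : Integrable (fun x => p x * Real.exp (-x)) := by
    simpa only [key] using ProbabilityTheory.integrable_gaussianPDFReal (-(σ ^ 2) / 2) v
  have I_pe : ∫ x, p x * Real.exp (-x) = 1 := by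
    simp only [key]
    exact ProbabilityTheory.integral_gaussianPDFReal_eq_one _ hv0
  -- p * h
  have hph : ∀ x, p x * h x
      = p x + (p x * Real.exp (-x) - p x) * (2 * Real.log 2)⁻¹ := by
    intro x
    simp only [hh]
    field_simp
  have int_ph : Integrable (fun x => p x * h x) := by
    simp only [hph]
    exact int_p.add ((int_pe.sub int_p).mul_const _)
  have int2 : Integrable (fun x => (p x * Real.exp (-x) - p x) * (2 * Real.log 2)⁻¹) :=
    (int_pe.sub int_p).mul_const _
  have I_ph : ∫ x, p x * h x = 1 := by
    simp only [hph]
    rw [integral_add int_p int2, integral_mul_const, integral_sub int_pe int_p, I_p, I_pe]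
    ring
  -- properties of g
  have hg_pos : ∀ x, 0 < g x := by
    intro x
    apply Real.logb_pos one_lt_two
    have := Real.exp_pos (-x)
    linarith
  have hgh : ∀ x, g x ≤ h x := fun x => logb_le_aux _ (Real.exp_pos _)
  have hgh' : ∀ x, x ≠ 0 → g x < h x := by
    intro x hx
    apply logb_lt_aux _ (Real.exp_pos _)
    intro hc
    rw [Real.exp_eq_one_iff, neg_eq_zero] at hc
    exact hx hc
  have meas_pg : AEStronglyMeasurable (fun x => p x * g x) volume := by
    apply Measurable.aestronglyMeasurable
    apply (ProbabilityTheory.measurable_gaussianPDFReal _ _).mul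
    simp only [hg, Real.logb]
    exact (Real.measurable_log.comp ((measurable_const.add
      (Real.measurable_exp.comp measurable_neg)))).div_const _
  have int_pg : Integrable (fun x => p x * g x) := by
    apply int_ph.mono meas_pg
    filter_upwards with x
    rw [Real.norm_eq_abs, Real.norm_eq_abs, abs_of_nonneg
      (mul_nonneg (hp_pos x).le (hg_pos x).le), abs_of_nonneg
      (mul_nonneg (hp_pos x).le ((hg_pos x).le.trans (hgh x)))]
    exact mul_le_mul_of_nonneg_left (hgh x) (hp_pos x).le
  -- lower bound: 0 < ∫ p g
  have I_pos : 0 < ∫ x, p x * g x := by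
    rw [integral_pos_iff_support_of_nonneg
      (fun x => mul_nonneg (hp_pos x).le (hg_pos x).le) int_pg]
    have : Function.support (fun x => p x * g x) = Set.univ := by
      ext x
      simp only [Function.mem_support, Set.mem_univ, iff_true]
      exact (mul_pos (hp_pos x) (hg_pos x)).ne'
    rw [this]
    simp
  -- upper bound: ∫ p g < 1
  have I_lt : ∫ x, p x * g x < 1 := by
    have hd : 0 < ∫ x, (p x * h x - p x * g x) := by
      rw [integral_pos_iff_support_of_nonneg
        (fun x => sub_nonneg.2 (mul_le_mul_of_nonneg_left (hgh x) (hp_pos x).le))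
        (int_ph.sub int_pg)]
      have hsub : ({0}ᶜ : Set ℝ) ⊆ Function.support (fun x => p x * h x - p x * g x) := by
        intro x hx
        have hx0 : x ≠ 0 := hx
        have : p x * g x < p x * h x :=
          mul_lt_mul_of_pos_left (hgh' x hx0) (hp_pos x)
        simp only [Function.mem_support]
        rw [sub_ne_zero]
        exact this.ne'
      calc (0:ENNReal) < volume (Set.Ioi (0:ℝ)) := by
            rw [Real.volume_Ioi]; exact ENNReal.zero_lt_top
        _ ≤ volume ({0}ᶜ : Set ℝ) := by
            apply measure_mono
            intro x hx
            exact ne_of_gt hx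
        _ ≤ _ := measure_mono hsub
    rw [integral_sub int_ph int_pg, I_ph] at hd
    linarith
  constructor
  · simp only [Jfun]
    have : (∫ x, ProbabilityTheory.gaussianPDFReal (σ ^ 2 / 2) (Real.toNNReal (σ ^ 2)) x *
        Real.logb 2 (1 + Real.exp (-x))) = ∫ x, p x * g x := rfl
    rw [this]; linarith
  · simp only [Jfun]
    have : (∫ x, ProbabilityTheory.gaussianPDFReal (σ ^ 2 / 2) (Real.toNNReal (σ ^ 2)) x *
        Real.logb 2 (1 + Real.exp (-x))) = ∫ x, p x * g x := rfl
    rw [this]; linarith
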